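/- For every real μ ≥ 0, the cubic polynomial −3x³ + 4x² − μx + 2μ has exactly one real root x with x > 1. Moreover, if μ > 0, then every real root of this polynomial satisfies x > 4/3, so this root is the unique real root of the polynomial. -/

import Mathlib

/-! Writing the cubic as `p(x) = x²(4 - 3x) + μ(2 - x)` shows `p(1) = 1 + μ > 0`, `p(2 + μ) < 0`,
and, for `μ > 0`, `p > 0` on `(-∞, 4/3]`. Since `p(b) - p(a) = (b - a)(4(a + b) - 3(a² + ab + b²) - μ)`
and the second factor is negative for `a, b ≥ 1`, `p` is strictly decreasing on `[1, ∞)`; the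
intermediate value theorem then yields exactly one root there. -/

open Set

def criticalCubic (μ x : ℝ) : ℝ := -3 * x ^ 3 + 4 * x ^ 2 - μ * x + 2 * μ

namespace criticalCubic

variable {μ : ℝ}

lemma eq_sq_mul_add (μ x : ℝ) : criticalCubic μ x = x ^ 2 * (4 - 3 * x) + μ * (2 - x) := by
  unfold criticalCubic; ring

lemma strictAntiOn_Ici (hμ : 0 ≤ μ) : StrictAntiOn (criticalCubic μ) (Ici 1) := by
  intro a (ha : 1 ≤ a) b (hb : 1 ≤ b) hab
  have hdiff : criticalCubic μ b - criticalCubic μ a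
      = (b - a) * (4 * (a + b) - 3 * (a ^ 2 + a * b + b ^ 2) - μ) := by
    unfold criticalCubic; ring
  have hfactor : 4 * (a + b) - 3 * (a ^ 2 + a * b + b ^ 2) - μ < 0 := by
    nlinarith [mul_nonneg (sub_nonneg.2 ha) (sub_nonneg.2 hb)]
  nlinarith [mul_neg_of_pos_of_neg (sub_pos.2 hab) hfactor]

lemma exists_eq_zero_of_one_lt (hμ : 0 ≤ μ) : ∃ x, 1 < x ∧ criticalCubic μ x = 0 := by
  have hcont : ContinuousOn (criticalCubic μ) (Icc 1 (2 + μ)) := by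
    unfold criticalCubic; fun_prop
  have hzero : (0 : ℝ) ∈ Ico (criticalCubic μ (2 + μ)) (criticalCubic μ 1) := by
    simp only [mem_Ico, eq_sq_mul_add]
    constructor <;> nlinarith
  obtain ⟨x, hx, hroot⟩ := intermediate_value_Ioc' (by linarith) hcont hzero
  exact ⟨x, hx.1, hroot⟩

lemma four_thirds_lt_of_eq_zero (hμ : 0 < μ) {x : ℝ} (hx : criticalCubic μ x = 0) :
    4 / 3 < x := by
  by_contra! hle
  rw [eq_sq_mul_add] at hx
  nlinarith [mul_nonneg (sq_nonneg x) (show 0 ≤ 4 - 3 * x by linarith),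
    mul_pos hμ (show 0 < 2 - x by linarith)]

end criticalCubic

theorem critical_cubic_unique_root (μ : ℝ) (hμ : 0 ≤ μ) :
    (∃! x : ℝ, 1 < x ∧ -3 * x ^ 3 + 4 * x ^ 2 - μ * x + 2 * μ = 0) ∧
      (0 < μ →
        (∀ x : ℝ, -3 * x ^ 3 + 4 * x ^ 2 - μ * x + 2 * μ = 0 → 4 / 3 < x) ∧
          ∃! x : ℝ, -3 * x ^ 3 + 4 * x ^ 2 - μ * x + 2 * μ = 0) := by
  obtain ⟨x, hx1, hx⟩ := criticalCubic.exists_eq_zero_of_one_lt hμ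
  have hinj : InjOn (criticalCubic μ) (Ioi 1) :=
    (criticalCubic.strictAntiOn_Ici hμ).injOn.mono Ioi_subset_Ici_self
  have huniq {y : ℝ} (hy1 : 1 < y) (hy : criticalCubic μ y = 0) : y = x :=
    hinj hy1 hx1 (hy.trans hx.symm)
  refine ⟨⟨x, ⟨hx1, hx⟩, fun y hy => huniq hy.1 hy.2⟩, fun hμpos => ?_⟩
  have hbound {y : ℝ} (hy : criticalCubic μ y = 0) : 4 / 3 < y :=
    criticalCubic.four_thirds_lt_of_eq_zero hμpos hy
  exact ⟨fun y hy => hbound hy, x, hx, fun y hy => huniq (by linarith [hbound hy]) hy⟩
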